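/- arXiv:1605.05823 — 5 statements merged into one kernel-verified Lean document; each statement's English description precedes it below -/
import Mathlib

section
/- The function C_p(C_T) = (1/2)(1 + sqrt(1 - C_T)) * C_T is a bijection from the interval [0, 8/9] onto the interval [0, 16/27]; hence every performance coefficient value C_p in [0, 16/27] is achieved by a unique thrust coefficient C_T in [0, 8/9]. -/
private lemma cp_mono : StrictMonoOn (fun CT : ℝ => (1 / 2) * (1 + Real.sqrt (1 - CT)) * CT)
    (Set.Icc (0 : ℝ) (8 / 9)) := by
  intro a ha b hb hab
  obtain ⟨ha0, ha1⟩ := ha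
  obtain ⟨hb0, hb1⟩ := hb
  set sa := Real.sqrt (1 - a) with hsa
  set sb := Real.sqrt (1 - b) with hsb
  have hsa2 : sa ^ 2 = 1 - a := Real.sq_sqrt (by linarith)
  have hsb2 : sb ^ 2 = 1 - b := Real.sq_sqrt (by linarith)
  have hsa0 : 0 ≤ sa := Real.sqrt_nonneg _
  have hsb0 : 0 ≤ sb := Real.sqrt_nonneg _
  have hsb3 : (1:ℝ)/3 ≤ sb := by nlinarith
  have hlt : sb < sa := by nlinarith
  simp only
  nlinarith [mul_pos (sub_pos.2 hlt) (sub_pos.2 hlt), sq_nonneg (sa + sb),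
    mul_nonneg hsa0 hsb0]

private lemma cp_cont : ContinuousOn (fun CT : ℝ => (1 / 2) * (1 + Real.sqrt (1 - CT)) * CT)
    (Set.Icc (0 : ℝ) (8 / 9)) := by
  fun_prop

private lemma e0 : (1:ℝ)/2 * (1 + Real.sqrt (1 - 0)) * 0 = 0 := by ring

private lemma e1 : (1:ℝ)/2 * (1 + Real.sqrt (1 - 8/9)) * (8/9) = 16/27 := by
  rw [show (1:ℝ) - 8/9 = (1/3)^2 by norm_num, Real.sqrt_sq (by norm_num)]
  norm_num

/-- The performance coefficient `C_p(C_T) = (1/2)(1 + sqrt(1 - C_T)) C_T` is a bijection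
from `[0, 8/9]` onto `[0, 16/27]`; hence every `C_p ∈ [0, 16/27]` is achieved by a
unique `C_T ∈ [0, 8/9]`. -/
theorem cp_bijOn :
    Set.BijOn (fun CT : ℝ => (1 / 2) * (1 + Real.sqrt (1 - CT)) * CT)
      (Set.Icc (0 : ℝ) (8 / 9)) (Set.Icc (0 : ℝ) (16 / 27)) ∧
    ∀ cp ∈ Set.Icc (0 : ℝ) (16 / 27),
      ∃! CT, CT ∈ Set.Icc (0 : ℝ) (8 / 9) ∧
        (1 / 2) * (1 + Real.sqrt (1 - CT)) * CT = cp := by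
  have h0 : (0:ℝ) ∈ Set.Icc (0:ℝ) (8/9) := by norm_num
  have h1 : (8/9:ℝ) ∈ Set.Icc (0:ℝ) (8/9) := by norm_num
  have hmaps : Set.MapsTo (fun CT : ℝ => (1 / 2) * (1 + Real.sqrt (1 - CT)) * CT)
      (Set.Icc (0:ℝ) (8/9)) (Set.Icc (0:ℝ) (16/27)) := by
    intro x hx
    constructor
    · have := cp_mono.monotoneOn h0 hx hx.1
      rw [e0] at this; exact this
    · have := cp_mono.monotoneOn hx h1 hx.2
      rw [e1] at this; exact this
  have hsurj : Set.SurjOn (fun CT : ℝ => (1 / 2) * (1 + Real.sqrt (1 - CT)) * CT)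
      (Set.Icc (0:ℝ) (8/9)) (Set.Icc (0:ℝ) (16/27)) := by
    have h := intermediate_value_Icc (by norm_num : (0:ℝ) ≤ 8/9) cp_cont
    rw [e0, e1] at h
    exact h
  have hbij : Set.BijOn (fun CT : ℝ => (1 / 2) * (1 + Real.sqrt (1 - CT)) * CT)
      (Set.Icc (0:ℝ) (8/9)) (Set.Icc (0:ℝ) (16/27)) :=
    ⟨hmaps, cp_mono.injOn, hsurj⟩
  refine ⟨hbij, fun cp hcp => ?_⟩
  obtain ⟨CT, hCT, hfCT⟩ := hsurj hcp
  exact ⟨CT, ⟨hCT, hfCT⟩, fun y hy => hbij.injOn hy.1 hCT (hy.2.trans hfCT.symm)⟩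
end

section
/- In the stationary wake model, if the wind speed at turbine i satisfies v_i ≥ v1 * (1 - k/k'), then the wind speed at turbine i+1 also satisfies v_{i+1} ≥ v1 * (1 - k/k'); consequently, by induction starting from v_1 = v1, every turbine in the row sees wind speed at least v1 * (1 - k/k') > 0. -/
/-- Stationary wake model: if `v i ≥ v1 * (1 - k/k')` then also
`v (i+1) ≥ v1 * (1 - k/k')`; consequently, by induction starting from `v 1 = v1`,
every turbine sees wind speed at least `v1 * (1 - k/k') > 0`. -/
theorem wake_speed_lower_bound
    (v1 k k' : ℝ) (hv1 : 0 < v1) (hk : 0 < k) (hkk' : k < k') (hk' : k' < 1)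
    (CT v : ℕ → ℝ) (hCT : ∀ i, CT i ∈ Set.Icc (0 : ℝ) 1)
    (hfirst : v 1 = v1)
    (hrec : ∀ i, 1 ≤ i → v (i + 1) = v i + k' * (v1 - v i) - k * v1 * CT i) :
    (∀ i, 1 ≤ i → v1 * (1 - k / k') ≤ v i → v1 * (1 - k / k') ≤ v (i + 1)) ∧
    (∀ n, 1 ≤ n → v1 * (1 - k / k') ≤ v n) ∧
    0 < v1 * (1 - k / k') := by
  have hk'0 : (0:ℝ) < k' := hk.trans hkk'
  have hpos : 0 < v1 * (1 - k / k') := by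
    apply mul_pos hv1
    have : k / k' < 1 := (div_lt_one hk'0).2 hkk'
    linarith
  have hstep : ∀ i, 1 ≤ i → v1 * (1 - k / k') ≤ v i → v1 * (1 - k / k') ≤ v (i + 1) := by
    intro i hi hvi
    rw [hrec i hi]
    have hCTi := hCT i
    have h1 : CT i ≤ 1 := hCTi.2
    have hkey : v1 * (1 - k / k') = (1 - k') * (v1 * (1 - k / k')) + k' * v1 - k * v1 := by
      field_simp
      ring
    have h2 : k * v1 * CT i ≤ k * v1 := by
      nlinarith [mul_pos hk hv1]
    have h3 : (1 - k') * (v1 * (1 - k / k')) ≤ (1 - k') * v i :=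
      mul_le_mul_of_nonneg_left hvi (by linarith)
    nlinarith
  refine ⟨hstep, ?_, hpos⟩
  intro n hn
  induction n with
  | zero => omega
  | succ m ih =>
    rcases Nat.lt_or_ge 1 (m + 1) with h | h
    · exact hstep m (by omega) (ih (by omega))
    · have : m = 0 := by omega
      subst this
      rw [hfirst]
      nlinarith [div_pos hk hk'0]
end

section
/- In the stationary wake model, the wind speeds are monotone in the thrust coefficients: if two rows of turbines have thrust coefficient sequences satisfying C_{T,i} ≤ C'_{T,i} for every i, and both rows start from the same free wind speed v_1 = v'_1 = v1, then the resulting wind speed sequences satisfy v_n ≥ v'_n for every n. -/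
/-- Stationary wake model: wind speeds are monotone in the thrust coefficients.
If `C_{T,i} ≤ C'_{T,i}` for every `i` and both rows start from the same free wind
speed, then `v' n ≤ v n` for every `n ≥ 1`. -/
theorem wake_speed_antitone_in_thrust
    (v1 k k' : ℝ) (hv1 : 0 < v1) (hk : 0 < k) (hkk' : k < k') (hk' : k' < 1)
    (CT CT' v v' : ℕ → ℝ)
    (hCT : ∀ i, CT i ∈ Set.Icc (0 : ℝ) 1) (hCT' : ∀ i, CT' i ∈ Set.Icc (0 : ℝ) 1)
    (hle : ∀ i, CT i ≤ CT' i)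
    (hfirst : v 1 = v1) (hfirst' : v' 1 = v1)
    (hrec : ∀ i, 1 ≤ i → v (i + 1) = v i + k' * (v1 - v i) - k * v1 * CT i)
    (hrec' : ∀ i, 1 ≤ i → v' (i + 1) = v' i + k' * (v1 - v' i) - k * v1 * CT' i) :
    ∀ n, 1 ≤ n → v' n ≤ v n := by
  intro n hn
  induction n with
  | zero => omega
  | succ m ih =>
    rcases Nat.eq_or_lt_of_le hn with h | h
    · have : m + 1 = 1 := h.symm
      rw [this, hfirst, hfirst']
    · have hm : 1 ≤ m := by omega
      have ihm := ih hm
      rw [hrec m hm, hrec' m hm]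
      have h1 : k * v1 * CT m ≤ k * v1 * CT' m := by
        apply mul_le_mul_of_nonneg_left (hle m)
        positivity
      nlinarith [ihm]
end

section
/- In the stationary wake model with a constant thrust coefficient C_T ∈ [0, 1] at every turbine, the wind speed sequence converges geometrically to the fixed point v* = v1 * (1 - (k/k') * C_T); more precisely, |v_n - v*| ≤ (1 - k')^{n-1} * |v1 - v*| for every n ≥ 1. -/
/-- Stationary wake model with constant thrust coefficient `C_T`: the wind speed
sequence converges geometrically to the fixed point `v* = v1 (1 - (k/k') C_T)`:
`|v n - v*| ≤ (1 - k')^(n-1) |v1 - v*|` for every `n ≥ 1`. -/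
theorem wake_geometric_convergence
    (v1 k k' CT : ℝ) (hv1 : 0 < v1) (hk : 0 < k) (hkk' : k < k') (hk' : k' < 1)
    (hCT : CT ∈ Set.Icc (0 : ℝ) 1)
    (v : ℕ → ℝ) (hfirst : v 1 = v1)
    (hrec : ∀ i, 1 ≤ i → v (i + 1) = v i + k' * (v1 - v i) - k * v1 * CT) :
    ∀ n, 1 ≤ n →
      |v n - v1 * (1 - (k / k') * CT)| ≤
        (1 - k') ^ (n - 1) * |v1 - v1 * (1 - (k / k') * CT)| := by
  have hk'0 : (0:ℝ) < k' := lt_trans hk hkk'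
  set vs := v1 * (1 - (k / k') * CT) with hvs
  intro n hn
  induction n with
  | zero => omega
  | succ m ih =>
    rcases Nat.eq_or_lt_of_le hn with h | h
    · have hm0 : m = 0 := by omega
      simp [hm0, hfirst]
    · have hm : 1 ≤ m := by omega
      have key : v (m + 1) - vs = (1 - k') * (v m - vs) := by
        rw [hrec m hm, hvs]
        field_simp
        ring
      have habs : |v (m+1) - vs| = (1 - k') * |v m - vs| := by
        rw [key, abs_mul, abs_of_nonneg (by linarith : (0:ℝ) ≤ 1 - k')]
      rw [habs]
      have : (1 - k') * |v m - vs| ≤ (1 - k') * ((1 - k') ^ (m - 1) * |v1 - vs|) :=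
        mul_le_mul_of_nonneg_left (ih hm) (by linarith)
      calc (1 - k') * |v m - vs| ≤ (1 - k') * ((1 - k') ^ (m - 1) * |v1 - vs|) := this
        _ = (1 - k') ^ (m + 1 - 1) * |v1 - vs| := by
            rw [show m + 1 - 1 = (m - 1) + 1 by omega, pow_succ]; ring
end

section
/- In the stationary wake model with v_1 = v1 and all thrust coefficients at most 1, the wind speed deficit is bounded by a geometric series: v1 - v_n ≤ (k/k') * v1 * (1 - (1 - k')^{n-1}) for every n ≥ 1; in particular v1 - v_n < (k/k') * v1 for every n. -/
/-- Stationary wake model with all thrust coefficients at most `1`: the wind speed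
deficit is bounded by a geometric series,
`v1 - v n ≤ (k/k') v1 (1 - (1 - k')^(n-1))` for `n ≥ 1`;
in particular `v1 - v n < (k/k') v1` for every such `n`. -/
theorem wake_deficit_geometric_bound
    (v1 k k' : ℝ) (hv1 : 0 < v1) (hk : 0 < k) (hkk' : k < k') (hk' : k' < 1)
    (CT v : ℕ → ℝ) (hCT : ∀ i, CT i ∈ Set.Icc (0 : ℝ) 1)
    (hfirst : v 1 = v1)
    (hrec : ∀ i, 1 ≤ i → v (i + 1) = v i + k' * (v1 - v i) - k * v1 * CT i) :
    (∀ n, 1 ≤ n → v1 - v n ≤ (k / k') * v1 * (1 - (1 - k') ^ (n - 1))) ∧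
    (∀ n, 1 ≤ n → v1 - v n < (k / k') * v1) := by
  have hk'0 : 0 < k' := hk.trans hkk'
  have h1k : 0 < 1 - k' := by linarith
  have main : ∀ n, 1 ≤ n → v1 - v n ≤ (k / k') * v1 * (1 - (1 - k') ^ (n - 1)) := by
    intro n hn
    induction n, hn using Nat.le_induction with
    | base => simp [hfirst]
    | succ n hn ih =>
      have hct := hCT n
      rw [hrec n hn]
      have hstep : v1 - (v n + k' * (v1 - v n) - k * v1 * CT n)
          = (1 - k') * (v1 - v n) + k * v1 * CT n := by ring
      rw [hstep]
      obtain ⟨hc0, hc1⟩ := hct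
      have hCTle : k * v1 * CT n ≤ k * v1 := by
        nlinarith [mul_pos hk hv1]
      have hmul : (1 - k') * (v1 - v n) ≤ (1 - k') * ((k / k') * v1 * (1 - (1 - k') ^ (n - 1))) :=
        mul_le_mul_of_nonneg_left ih (le_of_lt h1k)
      have hn1 : (1 - k') ^ n = (1 - k') * (1 - k') ^ (n - 1) := by
        conv_lhs => rw [← Nat.sub_add_cancel hn]
        rw [pow_succ']
      have heq : (1 - k') * ((k / k') * v1 * (1 - (1 - k') ^ (n - 1))) + k * v1
          = (k / k') * v1 * (1 - (1 - k') ^ (n + 1 - 1)) := by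
        have h : n + 1 - 1 = n := rfl
        rw [h, hn1]
        field_simp
        ring
      linarith
  refine ⟨main, fun n hn => ?_⟩
  have h := main n hn
  have hpow : (0 : ℝ) < (1 - k') ^ (n - 1) := pow_pos h1k _
  have hkv : 0 < (k / k') * v1 := by positivity
  nlinarith
end
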